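/- Let ρ > 0 and let f : ℝ → ℝ be twice continuously differentiable. Suppose that f is nonnegative and bounded on [1,∞) and satisfies f''(s) ≥ ρ² · f(s) for every s ≥ 1. Then f'(s) + ρ·f(s) ≤ 0 for every s ≥ 1. -/

import Mathlib

/-!
With `h = f' + ρ f` the hypothesis reads `h' ≥ ρ h`, so `e^{-ρ s} h(s)` is nondecreasing. If
`h(s₀) > 0`, then `h` grows at least like `h(s₀) e^{ρ (s - s₀)}`; as `ρ f` is bounded, `f'` tends
to `+∞`, which forces `f` to be unbounded.
-/

open Filter Real Set

theorem mul_exp_le_of_mul_le_deriv {h : ℝ → ℝ} (hh : Differentiable ℝ h) {ρ a : ℝ}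
    (hρh : ∀ x, a ≤ x → ρ * h x ≤ deriv h x) {x : ℝ} (hx : a ≤ x) :
    h a * exp (ρ * (x - a)) ≤ h x := by
  set g : ℝ → ℝ := fun s => exp (-(ρ * (s - a))) * h s
  have hg : ∀ s, HasDerivAt g (exp (-(ρ * (s - a))) * (deriv h s - ρ * h s)) s := by
    intro s
    have hexp : HasDerivAt (fun s => exp (-(ρ * (s - a)))) (exp (-(ρ * (s - a))) * -ρ) s := by
      simpa using (((hasDerivAt_id s).sub_const a).const_mul ρ).neg.exp
    exact (hexp.mul (hh s).hasDerivAt).congr_deriv (by ring)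
  have hmono : MonotoneOn g (Ici a) := by
    refine monotoneOn_of_deriv_nonneg (convex_Ici a)
      (fun s _ => (hg s).continuousAt.continuousWithinAt)
      (fun s _ => (hg s).differentiableAt.differentiableWithinAt) fun s hs => ?_
    rw [interior_Ici] at hs
    rw [(hg s).deriv]
    exact mul_nonneg (exp_pos _).le (sub_nonneg.mpr (hρh s (le_of_lt hs)))
  have hgx : h a ≤ (exp (ρ * (x - a)))⁻¹ * h x := by
    simpa [g, exp_neg] using hmono self_mem_Ici hx hx
  rw [mul_comm]
  exact (le_inv_mul_iff₀ (exp_pos _)).mp hgx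

theorem tendsto_atTop_of_mul_le_deriv {h : ℝ → ℝ} (hh : Differentiable ℝ h) {ρ a : ℝ}
    (hρ : 0 < ρ) (hρh : ∀ x, a ≤ x → ρ * h x ≤ deriv h x) (ha : 0 < h a) :
    Tendsto h atTop atTop := by
  have hexp : Tendsto (fun x => h a * exp (ρ * (x - a))) atTop atTop :=
    (tendsto_exp_atTop.comp ((tendsto_atTop_add_const_right _ (-a) tendsto_id).const_mul_atTop
      hρ)).const_mul_atTop ha
  exact tendsto_atTop_mono' _ (eventually_ge_atTop a |>.mono fun x hx =>
    mul_exp_le_of_mul_le_deriv hh hρh hx) hexp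

theorem not_tendsto_deriv_atTop_of_le {f : ℝ → ℝ} (hf : Differentiable ℝ f) {a M : ℝ}
    (hM : ∀ x, a ≤ x → f x ≤ M) : ¬ Tendsto (deriv f) atTop atTop := by
  intro hlim
  obtain ⟨b, hb⟩ := eventually_atTop.mp (hlim.eventually_ge_atTop 1)
  set c := max a b
  have hfc : f c ≤ M := hM c (le_max_left a b)
  set y := c + (M - f c + 1)
  have hcy : c ≤ y := by linarith
  have hgrowth : 1 * (y - c) ≤ f y - f c :=
    (convex_Ici c).mul_sub_le_image_sub_of_le_deriv hf.continuous.continuousOn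
      hf.differentiableOn
      (fun x hx => hb x ((le_max_right a b).trans (le_of_lt (interior_Ici.subset hx))))
      c self_mem_Ici y hcy hcy
  linarith [hM y ((le_max_left a b).trans hcy)]

theorem deriv_add_rho_mul_nonpos_general (ρ : ℝ) (hρ : 0 < ρ) (f : ℝ → ℝ) (hf : ContDiff ℝ 2 f)
    (hbdd : ∃ M : ℝ, ∀ s, 1 ≤ s → |f s| ≤ M)
    (hineq : ∀ s, 1 ≤ s → ρ ^ 2 * f s ≤ deriv (deriv f) s) :
    ∀ s, 1 ≤ s → deriv f s + ρ * f s ≤ 0 := by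
  intro s₀ hs₀
  by_contra! hpos
  obtain ⟨M, hM⟩ := hbdd
  have hfM : ∀ x, 1 ≤ x → f x ≤ M := fun x hx => (le_abs_self _).trans (hM x hx)
  have hf₁ : Differentiable ℝ f := hf.differentiable two_ne_zero
  have hf₂ : Differentiable ℝ (deriv f) := (hf.iterate_deriv' 1 1).differentiable one_ne_zero
  set h : ℝ → ℝ := fun s => deriv f s + ρ * f s
  have hh : ∀ x, HasDerivAt h (deriv (deriv f) x + ρ * deriv f x) x := fun x =>
    (hf₂ x).hasDerivAt.add ((hf₁ x).hasDerivAt.const_mul ρ)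
  have hh_tendsto : Tendsto h atTop atTop :=
    tendsto_atTop_of_mul_le_deriv (fun x => (hh x).differentiableAt) hρ (a := s₀)
      (fun x hx => by rw [(hh x).deriv]; linarith [hineq x (hs₀.trans hx)]) hpos
  have hρf : ∀ᶠ x in atTop, -(ρ * M) ≤ -(ρ * f x) := (eventually_ge_atTop 1).mono fun x hx =>
    neg_le_neg (mul_le_mul_of_nonneg_left (hfM x hx) hρ.le)
  have hf'_tendsto : Tendsto (deriv f) atTop atTop := by
    simpa [h] using tendsto_atTop_add_left_of_le' atTop _ hρf hh_tendsto
  exact not_tendsto_deriv_atTop_of_le hf₁ hfM hf'_tendsto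

/-- If `f` is twice continuously differentiable, nonnegative and bounded on `[1, ∞)`, and
satisfies `f'' ≥ ρ² f` there with `ρ > 0`, then `f' + ρ f ≤ 0` on `[1, ∞)`. -/
theorem deriv_add_rho_mul_nonpos (ρ : ℝ) (hρ : 0 < ρ) (f : ℝ → ℝ) (hf : ContDiff ℝ 2 f)
    (hnonneg : ∀ s, 1 ≤ s → 0 ≤ f s)
    (hbdd : ∃ M : ℝ, ∀ s, 1 ≤ s → |f s| ≤ M)
    (hineq : ∀ s, 1 ≤ s → ρ ^ 2 * f s ≤ deriv (deriv f) s) :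
    ∀ s, 1 ≤ s → deriv f s + ρ * f s ≤ 0 :=
  deriv_add_rho_mul_nonpos_general ρ hρ f hf hbdd hineq
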